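/- If Δ := (∑_{j=1}^q B_j) − (∑_{i=1}^p A_i) = −1 and ρ := (∏_{i=1}^p A_i^{−A_i})(∏_{j=1}^q B_j^{B_j}), then the Fox–Wright series ∑_{k=0}^∞ (∏_{i=1}^p Γ(α_i + k A_i) / ∏_{j=1}^q Γ(β_j + k B_j)) · z^k / k! converges absolutely for all complex z with |z| < ρ. -/

import Mathlib

/-!
Ratio test. Log-convexity of `Γ` compares the slope of `log Γ` over `[y, y + a]` with its
slopes `log (y - 1)` and `log (y + a)` over the adjacent unit intervals, giving
`(y - 1) ^ a ≤ Γ (y + a) / Γ y ≤ (y + a) ^ a`, hence `Γ (x + a) / Γ x ∼ x ^ a`. The ratio of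
consecutive Fox–Wright coefficients is therefore asymptotic to
`k ^ (∑ A - ∑ B) / (k + 1) * ∏ A ^ A / ∏ B ^ B`, which tends to `ρ⁻¹` exactly when `Δ = -1`.
-/

open Real Filter Topology

namespace Real

lemma log_Gamma_add_one_sub_log_Gamma {y : ℝ} (hy : 0 < y) :
    log (Gamma (y + 1)) - log (Gamma y) = log y := by
  rw [Gamma_add_one hy.ne', log_mul hy.ne' (Gamma_pos_of_pos hy).ne']
  ring

lemma rpow_sub_one_le_Gamma_add_div_Gamma {y a : ℝ} (hy : 1 < y) (ha : 0 < a) :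
    (y - 1) ^ a ≤ Gamma (y + a) / Gamma y := by
  have hslope := convexOn_log_Gamma.slope_mono_adjacent (x := y - 1) (y := y) (z := y + a)
    (Set.mem_Ioi.2 (by linarith)) (Set.mem_Ioi.2 (by linarith)) (by linarith) (by linarith)
  have hstep := log_Gamma_add_one_sub_log_Gamma (y := y - 1) (by linarith)
  simp only [Function.comp_apply, sub_sub_cancel, div_one, add_sub_cancel_left,
    sub_add_cancel] at hslope hstep
  rw [hstep, le_div_iff₀ ha] at hslope
  have hΓ := Gamma_pos_of_pos (by linarith : 0 < y)
  have hΓa := Gamma_pos_of_pos (by linarith : 0 < y + a)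
  rw [← log_le_log_iff (by positivity) (by positivity), log_rpow (by linarith),
    log_div hΓa.ne' hΓ.ne']
  linarith

lemma Gamma_add_div_Gamma_le_rpow_add {y a : ℝ} (hy : 0 < y) (ha : 0 < a) :
    Gamma (y + a) / Gamma y ≤ (y + a) ^ a := by
  have hslope := convexOn_log_Gamma.slope_mono_adjacent (x := y) (y := y + a) (z := y + a + 1)
    (Set.mem_Ioi.2 hy) (Set.mem_Ioi.2 (by linarith)) (by linarith) (by linarith)
  have hstep := log_Gamma_add_one_sub_log_Gamma (y := y + a) (by linarith)
  simp only [Function.comp_apply, add_sub_cancel_left, div_one] at hslope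
  rw [hstep, div_le_iff₀ ha] at hslope
  have hΓ := Gamma_pos_of_pos hy
  have hΓa := Gamma_pos_of_pos (by linarith : 0 < y + a)
  rw [← log_le_log_iff (by positivity) (by positivity), log_rpow (by linarith),
    log_div hΓa.ne' hΓ.ne']
  linarith

lemma tendsto_add_div_self_rpow (a b : ℝ) :
    Tendsto (fun x : ℝ => ((x + b) / x) ^ a) atTop (𝓝 1) := by
  have h : Tendsto (fun x : ℝ => 1 + b / x) atTop (𝓝 1) := by
    simpa using tendsto_const_nhds.add (tendsto_const_nhds.div_atTop (tendsto_id (α := ℝ)))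
  refine (one_rpow a ▸ h.rpow_const (Or.inl one_ne_zero)).congr' ?_
  filter_upwards [eventually_ne_atTop 0] with x hx
  rw [add_div, div_self hx]

lemma tendsto_Gamma_add_div_Gamma_div_rpow (c : ℝ) {a : ℝ} (ha : 0 < a) :
    Tendsto (fun x => Gamma (x + c + a) / Gamma (x + c) / x ^ a) atTop (𝓝 1) := by
  refine tendsto_of_tendsto_of_tendsto_of_le_of_le' (tendsto_add_div_self_rpow a (c - 1))
    (tendsto_add_div_self_rpow a (c + a)) ?_ ?_
  all_goals
    filter_upwards [eventually_gt_atTop 0, eventually_gt_atTop (1 - c)] with x hx hxc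
    rw [div_rpow (by linarith) hx.le]
    gcongr
  · simpa [add_sub_assoc] using rpow_sub_one_le_Gamma_add_div_Gamma (y := x + c) (by linarith) ha
  · simpa [add_assoc] using Gamma_add_div_Gamma_le_rpow_add (y := x + c) (by linarith) ha

lemma tendsto_Gamma_natCast_succ_mul_div (c : ℝ) {a : ℝ} (ha : 0 < a) :
    Tendsto (fun k : ℕ => Gamma (c + ((k + 1 : ℕ) : ℝ) * a) / Gamma (c + k * a) / (k * a) ^ a)
      atTop (𝓝 1) := by
  refine ((tendsto_Gamma_add_div_Gamma_div_rpow c ha).comp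
    (tendsto_natCast_atTop_atTop.atTop_mul_const ha)).congr fun k => ?_
  simp only [Function.comp_apply]
  push_cast
  ring_nf

end Real

section FoxWright

variable {ι κ : Type*} [Fintype ι] [Fintype κ]

theorem tendsto_prod_Gamma_succ_div_prod_Gamma (c a : ι → ℝ) (ha : ∀ i, 0 < a i) :
    Tendsto (fun k : ℕ => (∏ i, Gamma (c i + ((k + 1 : ℕ) : ℝ) * a i)) /
      (∏ i, Gamma (c i + k * a i)) / ((k : ℝ) ^ (∑ i, a i) * ∏ i, a i ^ a i))
      atTop (𝓝 1) := by
  have h := tendsto_finsetProd Finset.univ fun i _ =>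
    Real.tendsto_Gamma_natCast_succ_mul_div (c i) (ha i)
  rw [Finset.prod_const_one] at h
  refine h.congr fun k => ?_
  simp only [Finset.prod_div_distrib, mul_rpow (Nat.cast_nonneg k) (ha _).le,
    Finset.prod_mul_distrib, rpow_sum_of_nonneg (Nat.cast_nonneg k) fun i _ => (ha i).le]

theorem eventually_prod_Gamma_pos (c a : ι → ℝ) (ha : ∀ i, 0 < a i) :
    ∀ᶠ k : ℕ in atTop, 0 < ∏ i, Gamma (c i + k * a i) := by
  have h : ∀ᶠ k : ℕ in atTop, ∀ i, 0 < c i + k * a i := eventually_all.2 fun i =>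
    (tendsto_atTop_add_const_left _ _
      (tendsto_natCast_atTop_atTop.atTop_mul_const (ha i))).eventually_gt_atTop 0
  filter_upwards [h] with k hk using Finset.prod_pos fun i _ => Gamma_pos_of_pos (hk i)

noncomputable def foxWrightCoeff (α A : ι → ℝ) (β B : κ → ℝ) (k : ℕ) : ℝ :=
  (∏ i, Gamma (α i + k * A i)) / (∏ j, Gamma (β j + k * B j)) / k.factorial

variable {α A : ι → ℝ} {β B : κ → ℝ}

theorem eventually_foxWrightCoeff_pos (hA : ∀ i, 0 < A i) (hB : ∀ j, 0 < B j) :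
    ∀ᶠ k in atTop, 0 < foxWrightCoeff α A β B k := by
  filter_upwards [eventually_prod_Gamma_pos α A hA, eventually_prod_Gamma_pos β B hB]
    with k hPA hPB
  unfold foxWrightCoeff
  positivity

theorem tendsto_foxWrightCoeff_succ_div (hA : ∀ i, 0 < A i) (hB : ∀ j, 0 < B j)
    (hΔ : (∑ j, B j) - (∑ i, A i) = -1) :
    Tendsto (fun k => foxWrightCoeff α A β B (k + 1) / foxWrightCoeff α A β B k) atTop
      (𝓝 ((∏ i, A i ^ A i) / ∏ j, B j ^ B j)) := by
  have h := ((tendsto_prod_Gamma_succ_div_prod_Gamma α A hA).div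
    (tendsto_prod_Gamma_succ_div_prod_Gamma β B hB) one_ne_zero).mul
    ((tendsto_natCast_div_add_atTop (1 : ℝ)).mul_const ((∏ i, A i ^ A i) / ∏ j, B j ^ B j))
  rw [div_one, one_mul, one_mul] at h
  refine h.congr' ?_
  filter_upwards [eventually_prod_Gamma_pos α A hA, eventually_prod_Gamma_pos β B hB,
    (tendsto_add_atTop_nat 1).eventually (eventually_prod_Gamma_pos β B hB),
    eventually_gt_atTop 0] with k hPA hPB hPB' hk
  have hk' : (0 : ℝ) < k := Nat.cast_pos.2 hk
  have hsum : (k : ℝ) ^ (∑ i, A i) = (k : ℝ) ^ (∑ j, B j) * k := by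
    rw [show ∑ i, A i = ∑ j, B j + 1 by linarith, rpow_add hk', rpow_one]
  have hQA : 0 < ∏ i, A i ^ A i := Finset.prod_pos fun i _ => rpow_pos_of_pos (hA i) _
  have hQB : 0 < ∏ j, B j ^ B j := Finset.prod_pos fun j _ => rpow_pos_of_pos (hB j) _
  simp only [Pi.div_apply, foxWrightCoeff, Nat.factorial_succ, Nat.cast_mul, hsum]
  field_simp
  push_cast
  ring

end FoxWright

theorem summable_norm_mul_pow_of_tendsto_norm_div {𝕜 : Type*} [NormedDivisionRing 𝕜]
    {c : ℕ → 𝕜} {L r : ℝ} (hc : ∀ᶠ n in atTop, c n ≠ 0)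
    (h : Tendsto (fun n => ‖c (n + 1)‖ / ‖c n‖) atTop (𝓝 L)) (hr : 0 ≤ r) (hrL : r * L < 1) :
    Summable fun n => ‖c n‖ * r ^ n := by
  rcases hr.eq_or_lt with rfl | hr
  · refine summable_of_ne_finset_zero (s := {0}) fun n hn => ?_
    simp [zero_pow (Finset.notMem_singleton.1 hn)]
  refine summable_of_ratio_test_tendsto_lt_one (l := L * r) (by linarith) ?_ ?_
  · filter_upwards [hc] with n hn using by positivity
  · refine (h.mul_const r).congr' ?_
    filter_upwards [hc] with n hn
    rw [norm_mul, norm_mul, norm_norm, norm_norm, norm_pow, norm_pow, Real.norm_of_nonneg hr.le,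
      pow_succ]
    field_simp

theorem foxWright_abs_convergent_of_delta_eq_neg_one_general
    (p q : ℕ) (A : Fin p → ℝ) (B : Fin q → ℝ) (α : Fin p → ℝ) (β : Fin q → ℝ)
    (hA : ∀ i, 0 < A i) (hB : ∀ j, 0 < B j)
    (hΔ : (∑ j, B j) - (∑ i, A i) = -1)
    (ρ : ℝ) (hρ : ρ = (∏ i, (A i) ^ (-(A i))) * (∏ j, (B j) ^ (B j))) :
    ∀ z : ℂ, ‖z‖ < ρ → Summable (fun k : ℕ =>
      ‖(((∏ i, Real.Gamma (α i + k * A i)) / (∏ j, Real.Gamma (β j + k * B j)) : ℝ) : ℂ)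
        * z ^ k / (Nat.factorial k : ℂ)‖) := by
  intro z hz
  have hρ_inv : ρ⁻¹ = (∏ i, A i ^ A i) / ∏ j, B j ^ B j := by
    simp only [hρ, mul_inv, ← Finset.prod_inv_distrib, rpow_neg (hA _).le, inv_inv, div_eq_mul_inv]
  have hρ_pos : 0 < ρ := by
    rw [hρ]
    exact mul_pos (Finset.prod_pos fun i _ => rpow_pos_of_pos (hA i) _)
      (Finset.prod_pos fun j _ => rpow_pos_of_pos (hB j) _)
  have hratio := (tendsto_foxWrightCoeff_succ_div (α := α) (β := β) hA hB hΔ).norm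
  rw [← hρ_inv, norm_inv, Real.norm_of_nonneg hρ_pos.le] at hratio
  refine (summable_norm_mul_pow_of_tendsto_norm_div
    ((eventually_foxWrightCoeff_pos hA hB).mono fun k hk => hk.ne')
    (by simpa only [norm_div] using hratio) (norm_nonneg z)
    (by rwa [← div_eq_mul_inv, div_lt_one hρ_pos])).congr fun k => ?_
  simp only [foxWrightCoeff, norm_div, norm_mul, norm_pow, Complex.norm_real,
    Complex.norm_natCast, Real.norm_natCast]
  ring

theorem foxWright_abs_convergent_of_delta_eq_neg_one
    (p q : ℕ) (A : Fin p → ℝ) (B : Fin q → ℝ) (α : Fin p → ℝ) (β : Fin q → ℝ)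
    (hA : ∀ i, 0 < A i) (hB : ∀ j, 0 < B j)
    (hα : ∀ i, 0 < α i) (hβ : ∀ j, 0 < β j)
    (hΔ : (∑ j, B j) - (∑ i, A i) = -1)
    (ρ : ℝ) (hρ : ρ = (∏ i, (A i) ^ (-(A i))) * (∏ j, (B j) ^ (B j))) :
    ∀ z : ℂ, ‖z‖ < ρ → Summable (fun k : ℕ =>
      ‖(((∏ i, Real.Gamma (α i + k * A i)) / (∏ j, Real.Gamma (β j + k * B j)) : ℝ) : ℂ)
        * z ^ k / (Nat.factorial k : ℂ)‖) :=
  foxWright_abs_convergent_of_delta_eq_neg_one_general p q A B α β hA hB hΔ ρ hρ
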